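/- If for some c : Fin m → ℝ the set ∂F_c of minimizers of y ↦ c ⬝ᵥ y over F is not convex, then c·A is positive semidefinite and singular (i.e. (c·A).PosSemidef and there exists x ≠ 0 with (c·A).mulVec x = 0). In other words, boundary non-convexities can occur only for c on the boundary of the cone {c | (c·A).PosSemidef}. -/

import Mathlib

/-!
Along the weights `c`, the objective `y ↦ c ⬝ᵥ y` pulls back to the inhomogeneous quadratic
`q x = xᵀ Q x + 2 βᵀ x` with `Q = c·A`, `β = c·b`. A non-convex set is nonempty, so `q` has a
minimizer `x₀`; expanding `q (x₀ + t v) - q x₀ = t² vᵀQv + 2t vᵀ(Q x₀ + β) ≥ 0` for all `t` forces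
`Q ⪰ 0` and `Q x₀ + β = 0`, hence `q x = q x₀ + (x - x₀)ᵀ Q (x - x₀)`. If `Q` were nonsingular,
`x₀` would be the only minimizer, and the set of minimizing values `{f x₀}` would be convex.
-/

open Matrix

section
variable {ι R : Type*} [Fintype ι]

def quadraticFun [CommRing R] (Q : Matrix ι ι R) (β : ι → R) (x : ι → R) : R :=
  x ⬝ᵥ Q *ᵥ x + 2 * (β ⬝ᵥ x)

theorem sum_mul_quadraticFun [CommRing R] {κ : Type*} (s : Finset κ) (c : κ → R)
    (A : κ → Matrix ι ι R) (b : κ → ι → R) (x : ι → R) :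
    ∑ k ∈ s, c k * quadraticFun (A k) (b k) x =
      quadraticFun (∑ k ∈ s, c k • A k) (∑ k ∈ s, c k • b k) x := by
  simp only [quadraticFun, sum_mulVec, smul_mulVec, dotProduct_sum, sum_dotProduct,
    dotProduct_smul, smul_dotProduct, smul_eq_mul, mul_add, Finset.sum_add_distrib, Finset.mul_sum]
  congr 1
  exact Finset.sum_congr rfl fun k _ => mul_left_comm _ _ _

theorem quadraticFun_add_smul [CommRing R] {Q : Matrix ι ι R} (hQ : Q.IsSymm) (β x v : ι → R)
    (t : R) :
    quadraticFun Q β (x + t • v) =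
      quadraticFun Q β x + t ^ 2 * (v ⬝ᵥ Q *ᵥ v) + 2 * t * (v ⬝ᵥ (Q *ᵥ x + β)) := by
  have hcomm : x ⬝ᵥ Q *ᵥ v = v ⬝ᵥ Q *ᵥ x := by
    rw [dotProduct_mulVec, ← mulVec_transpose, hQ.eq, dotProduct_comm]
  simp only [quadraticFun, mulVec_add, mulVec_smul, dotProduct_add, add_dotProduct,
    dotProduct_smul, smul_dotProduct, smul_eq_mul, hcomm, dotProduct_comm β]
  ring

end

theorem nonneg_and_eq_zero_of_forall_quadratic_nonneg {K : Type*} [Field K] [LinearOrder K]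
    [IsStrictOrderedRing K] {a b : K} (h : ∀ t, 0 ≤ a * t ^ 2 + b * t) : 0 ≤ a ∧ b = 0 := by
  have hdiscr : discrim a b 0 ≤ 0 := discrim_le_zero fun t => by simpa [sq] using h t
  have h₁ := h 1
  have h₂ := h (-1)
  refine ⟨by linarith, pow_eq_zero_iff two_ne_zero |>.mp ?_⟩
  rw [discrim, mul_zero, sub_zero] at hdiscr
  exact le_antisymm hdiscr (sq_nonneg b)

section
variable {ι : Type*} [Fintype ι] {Q : Matrix ι ι ℝ} {β : ι → ℝ}

theorem posSemidef_and_mulVec_add_eq_zero_of_forall_le (hQ : Q.IsSymm) {x₀ : ι → ℝ}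
    (hmin : ∀ x, quadraticFun Q β x₀ ≤ quadraticFun Q β x) :
    Q.PosSemidef ∧ Q *ᵥ x₀ + β = 0 := by
  have h v := nonneg_and_eq_zero_of_forall_quadratic_nonneg (a := v ⬝ᵥ Q *ᵥ v)
    (b := 2 * (v ⬝ᵥ (Q *ᵥ x₀ + β))) fun t => by
      have := hmin (x₀ + t • v)
      rw [quadraticFun_add_smul hQ] at this
      linarith
  refine ⟨posSemidef_iff_dotProduct_mulVec.mpr ⟨isHermitian_iff_isSymm.mpr hQ, fun v => ?_⟩, ?_⟩
  · simpa using (h v).1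
  · exact dotProduct_self_eq_zero.mp ((mul_eq_zero.mp (h _).2).resolve_left two_ne_zero)

theorem eq_of_forall_quadraticFun_le (hQ : Q.IsSymm) (hker : ∀ v, v ≠ 0 → Q *ᵥ v ≠ 0)
    {x y : ι → ℝ} (hx : ∀ z, quadraticFun Q β x ≤ quadraticFun Q β z)
    (hy : ∀ z, quadraticFun Q β y ≤ quadraticFun Q β z) : x = y := by
  obtain ⟨hpsd, hgrad⟩ := posSemidef_and_mulVec_add_eq_zero_of_forall_le hQ hx
  have hexpand := quadraticFun_add_smul hQ β x (y - x) 1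
  rw [one_smul, add_sub_cancel, hgrad, dotProduct_zero, one_pow, one_mul, mul_zero,
    add_zero] at hexpand
  have hzero : (y - x) ⬝ᵥ Q *ᵥ (y - x) = 0 :=
    le_antisymm (by linarith [hy x]) (by simpa using hpsd.dotProduct_mulVec_nonneg (y - x))
  by_contra hne
  exact hker (y - x) (sub_ne_zero.mpr (Ne.symm hne))
    ((hpsd.dotProduct_mulVec_zero_iff (y - x)).mp (by simpa using hzero))

end

theorem boundary_nonconvexity_only_on_cone_boundary (n m : ℕ)
    (A : Fin m → Matrix (Fin n) (Fin n) ℝ) (hA : ∀ k, (A k)ᵀ = A k)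
    (b : Fin m → (Fin n → ℝ))
    (f : (Fin n → ℝ) → (Fin m → ℝ))
    (hf : ∀ x k, f x k = x ⬝ᵥ (A k).mulVec x + 2 * (b k ⬝ᵥ x))
    (c : Fin m → ℝ)
    (hncvx : ¬ Convex ℝ {y ∈ Set.range f | ∀ y' ∈ Set.range f, c ⬝ᵥ y ≤ c ⬝ᵥ y'}) :
    (∑ k, c k • A k).PosSemidef ∧
      ∃ x : Fin n → ℝ, x ≠ 0 ∧ (∑ k, c k • A k).mulVec x = 0 := by
  have hQ : (∑ k, c k • A k).IsSymm := by simp [IsSymm, transpose_sum, hA]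
  have hcf x : c ⬝ᵥ f x = quadraticFun (∑ k, c k • A k) (∑ k, c k • b k) x := by
    rw [← sum_mul_quadraticFun]
    exact Finset.sum_congr rfl fun k _ => by rw [hf]; rfl
  obtain ⟨_, ⟨x₀, rfl⟩, hx₀⟩ :
      {y ∈ Set.range f | ∀ y' ∈ Set.range f, c ⬝ᵥ y ≤ c ⬝ᵥ y'}.Nonempty :=
    Set.nonempty_iff_ne_empty.mpr fun h => hncvx (h ▸ convex_empty)
  simp only [Set.forall_mem_range, hcf] at hx₀
  refine ⟨(posSemidef_and_mulVec_add_eq_zero_of_forall_le hQ hx₀).1, ?_⟩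
  by_contra! hker
  refine hncvx (Set.Subsingleton.convex ?_)
  rintro _ ⟨⟨x, rfl⟩, hx⟩ _ ⟨⟨y, rfl⟩, hy⟩
  simp only [Set.forall_mem_range, hcf] at hx hy
  rw [eq_of_forall_quadraticFun_le hQ hker hx hy]
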